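/- arXiv:1608.07495 — 4 statements merged into one kernel-verified Lean document; each statement's English description precedes it below -/
import Mathlib

section
/- Let Y be a λ-subprojective Banach space and T: X → Y a bounded operator. Then SS(T) ≤ λ·SS(T*), where SS(U) = sup over infinite-dimensional closed subspaces M of dom(U) of inf{‖Ux‖ : x ∈ M, ‖x‖=1}. -/
open NormedSpace Metric Set Filter
open scoped ENNReal

noncomputable section

/-- Hausdorff measure of noncompactness of a set. -/
def hchi {Y : Type*} [SeminormedAddCommGroup Y] (A : Set Y) : ℝ :=
  sInf { r : ℝ | ∃ F : Finset Y, ∀ a ∈ A, ∃ y ∈ F, dist a y ≤ r }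

variable {X Y Z : Type*} [NormedAddCommGroup X] [NormedSpace ℝ X]
  [NormedAddCommGroup Y] [NormedSpace ℝ Y]

/-- χ(T) = Hausdorff measure of noncompactness of T(B_X). -/
def chiOp (T : X →L[ℝ] Y) : ℝ := hchi (T '' closedBall 0 1)

/-- SS(T): the quantity measuring strict singularity. -/
def SS (T : X →L[ℝ] Y) : ℝ :=
  sSup { c : ℝ | ∃ M : Submodule ℝ X, IsClosed (M : Set X) ∧ ¬ FiniteDimensional ℝ M ∧
      c = sInf { r : ℝ | ∃ x ∈ M, ‖x‖ = 1 ∧ r = ‖T x‖ } }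

/-- SS_Z(T): the quantity measuring Z-strict singularity. -/
def SSZ (Z : Type*) [NormedAddCommGroup Z] [NormedSpace ℝ Z] (T : X →L[ℝ] Y) : ℝ :=
  sSup { r : ℝ | ∃ R : Z →L[ℝ] X, ∃ c : ℝ, 0 < c ∧ (∀ z, c * ‖z‖ ≤ ‖T (R z)‖) ∧ r = c / ‖R‖ }

/-- The adjoint (dual) operator T* : Y* → X*. -/
def adjOp (T : X →L[ℝ] Y) : StrongDual ℝ Y →L[ℝ] StrongDual ℝ X :=
  (ContinuousLinearMap.compL ℝ X Y ℝ).flip T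

/-- δ(S) for a (surjective) map S: the supremum of δ > 0 with δ·B ⊆ S(B). -/
def deltaQ {W : Type*} [SeminormedAddCommGroup W] (S : X → W) : ℝ :=
  sSup { d : ℝ | 0 < d ∧ ∀ w : W, ‖w‖ ≤ d → ∃ x : X, ‖x‖ ≤ 1 ∧ S x = w }

/-- SCS(T): the quantity measuring strict cosingularity. -/
def SCS (T : X →L[ℝ] Y) : ℝ :=
  sSup { r : ℝ | ∃ N : Submodule ℝ Y, IsClosed (N : Set Y) ∧ ¬ FiniteDimensional ℝ (Y ⧸ N) ∧
      Function.Surjective (fun x : X => (Submodule.Quotient.mk (T x) : Y ⧸ N)) ∧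
      r = deltaQ (fun x : X => (Submodule.Quotient.mk (T x) : Y ⧸ N)) }

/-- SCS_Z(T): the quantity measuring Z-strict cosingularity. -/
def SCSZ (Z : Type*) [NormedAddCommGroup Z] [NormedSpace ℝ Z] (T : X →L[ℝ] Y) : ℝ :=
  sSup { r : ℝ | ∃ S : Y →L[ℝ] Z, Function.Surjective (fun x : X => S (T x)) ∧
      r = deltaQ (fun x : X => S (T x)) / ‖S‖ }

/-- The annihilator M^⊥ in the continuous dual. -/
def annih (M : Submodule ℝ X) : Submodule ℝ (StrongDual ℝ X) where
  carrier := { f | ∀ x ∈ M, f x = 0 }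
  add_mem' := by intro f g hf hg x hx; simp [hf x hx, hg x hx]
  zero_mem' := by intro x _; simp
  smul_mem' := by intro c f hf x hx; simp [hf x hx]

/-- The quantity wk_Z(A) measuring weak non-compactness. -/
def wkk (Z : Type*) [NormedAddCommGroup Z] [NormedSpace ℝ Z] (A : Set Z) : ℝ :=
  sSup { r : ℝ | ∃ φ : StrongDual ℝ (StrongDual ℝ Z),
      StrongDual.toWeakDual φ ∈ closure (StrongDual.toWeakDual '' (inclusionInDoubleDual ℝ Z '' A)) ∧
      r = Metric.infDist φ (Set.range (inclusionInDoubleDual ℝ Z)) }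

/-- A Banach space is λ-subprojective. -/
def Subprojective (lam : ℝ) (Y : Type*) [NormedAddCommGroup Y] [NormedSpace ℝ Y] : Prop :=
  ∀ M : Submodule ℝ Y, IsClosed (M : Set Y) → ¬ FiniteDimensional ℝ M →
    ∃ N : Submodule ℝ Y, N ≤ M ∧ IsClosed (N : Set Y) ∧ ¬ FiniteDimensional ℝ N ∧
      ∃ P : Y →L[ℝ] Y, ‖P‖ ≤ lam ∧ LinearMap.range (P : Y →ₗ[ℝ] Y) = N ∧ ∀ y, P (P y) = P y

/-- A Banach space is λ-superprojective. -/
def Superprojective (lam : ℝ) (Y : Type*) [NormedAddCommGroup Y] [NormedSpace ℝ Y] : Prop :=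
  ∀ M : Submodule ℝ Y, IsClosed (M : Set Y) → ¬ FiniteDimensional ℝ (Y ⧸ M) →
    ∃ N : Submodule ℝ Y, M ≤ N ∧ IsClosed (N : Set Y) ∧ ¬ FiniteDimensional ℝ (Y ⧸ N) ∧
      ∃ P : Y →L[ℝ] Y, ‖P‖ ≤ lam ∧ LinearMap.range (P : Y →ₗ[ℝ] Y) = N ∧ ∀ y, P (P y) = P y

end

/-! If `‖T x‖ ≥ c ‖x‖` on a closed infinite-dimensional subspace `M`, then `T M` is closed and
infinite-dimensional, so `λ`-subprojectivity gives a projection `P` with `‖P‖ ≤ λ` onto an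
infinite-dimensional `N ⊆ T M`. The annihilator `(ker P)^⊥` is a closed infinite-dimensional
subspace of `Y*` (it contains the injective image of `N*` under `g ↦ g ∘ P`), and on it
`‖T* g‖ ≥ (c / λ) ‖g‖`: writing `P y = T x`, we get `g y = g (P y) = (T* g) x` and
`c ‖x‖ ≤ ‖P y‖ ≤ λ ‖y‖`. -/

namespace Submodule

variable {E : Type*} [NormedAddCommGroup E] [NormedSpace ℝ E]

theorem ne_bot_of_not_finiteDimensional {M : Submodule ℝ E} (hM : ¬ FiniteDimensional ℝ M) :
    M ≠ ⊥ := by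
  rintro rfl
  exact hM inferInstance

theorem exists_mem_norm_eq_one {M : Submodule ℝ E} (hM : M ≠ ⊥) : ∃ x ∈ M, ‖x‖ = 1 := by
  have : Nontrivial M := M.nontrivial_iff_ne_bot.mpr hM
  obtain ⟨x, hx⟩ := exists_norm_eq M zero_le_one
  exact ⟨x, x.2, hx⟩

end Submodule

theorem not_finiteDimensional_strongDual {E : Type*} [NormedAddCommGroup E] [NormedSpace ℝ E]
    (hE : ¬ FiniteDimensional ℝ E) : ¬ FiniteDimensional ℝ (StrongDual ℝ E) := fun _ =>
  hE (.of_injective (inclusionInDoubleDualLi ℝ).toLinearMap (inclusionInDoubleDualLi ℝ).injective)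

section LowerBound

variable {E F : Type*} [NormedAddCommGroup E] [NormedSpace ℝ E]
  [NormedAddCommGroup F] [NormedSpace ℝ F]

noncomputable def lowerBoundOn (U : E →L[ℝ] F) (M : Submodule ℝ E) : ℝ :=
  sInf {r | ∃ x ∈ M, ‖x‖ = 1 ∧ r = ‖U x‖}

variable (U : E →L[ℝ] F) {M : Submodule ℝ E}

theorem lowerBoundOn_nonneg : 0 ≤ lowerBoundOn U M :=
  Real.sInf_nonneg <| by rintro r ⟨x, -, -, rfl⟩; positivity

theorem lowerBoundOn_mul_norm_le {x : E} (hx : x ∈ M) : lowerBoundOn U M * ‖x‖ ≤ ‖U x‖ := by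
  rcases eq_or_ne x 0 with rfl | hx0
  · simp
  have hnx : 0 < ‖x‖ := norm_pos_iff.mpr hx0
  have hunit : ‖‖x‖⁻¹ • x‖ = 1 := by rw [norm_smul, norm_inv, norm_norm, inv_mul_cancel₀ hnx.ne']
  have h : lowerBoundOn U M ≤ ‖U (‖x‖⁻¹ • x)‖ :=
    csInf_le ⟨0, by rintro r ⟨y, -, -, rfl⟩; positivity⟩ ⟨‖x‖⁻¹ • x, M.smul_mem _ hx, hunit, rfl⟩
  rw [map_smul, norm_smul, norm_inv, norm_norm, inv_mul_eq_div] at h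
  exact (le_div_iff₀ hnx).mp h

theorem le_lowerBoundOn (hM : M ≠ ⊥) {c : ℝ} (h : ∀ x ∈ M, ‖x‖ = 1 → c ≤ ‖U x‖) :
    c ≤ lowerBoundOn U M := by
  obtain ⟨x, hxM, hx⟩ := Submodule.exists_mem_norm_eq_one hM
  exact le_csInf ⟨_, x, hxM, hx, rfl⟩ <| by rintro r ⟨y, hyM, hy, rfl⟩; exact h y hyM hy

theorem lowerBoundOn_le_opNorm (hM : M ≠ ⊥) : lowerBoundOn U M ≤ ‖U‖ := by
  obtain ⟨x, hxM, hx⟩ := Submodule.exists_mem_norm_eq_one hM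
  simpa [hx] using (lowerBoundOn_mul_norm_le U hxM).trans (U.le_opNorm x)

theorem lowerBoundOn_le_SS (hMc : IsClosed (M : Set E)) (hM : ¬ FiniteDimensional ℝ M) :
    lowerBoundOn U M ≤ SS U :=
  le_csSup ⟨‖U‖, by
      rintro c ⟨M', -, hM', rfl⟩
      exact lowerBoundOn_le_opNorm U (Submodule.ne_bot_of_not_finiteDimensional hM')⟩
    ⟨M, hMc, hM, rfl⟩

theorem SS_nonneg : 0 ≤ SS U :=
  Real.sSup_nonneg <| by rintro c ⟨M, -, -, rfl⟩; exact lowerBoundOn_nonneg U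

theorem SS_le {c : ℝ} (hc : 0 ≤ c)
    (h : ∀ M : Submodule ℝ E, IsClosed (M : Set E) → ¬ FiniteDimensional ℝ M →
      lowerBoundOn U M ≤ c) :
    SS U ≤ c :=
  Real.sSup_le (by rintro _ ⟨M, hMc, hM, rfl⟩; exact h M hMc hM) hc

end LowerBound

section BoundedBelow

variable {E F : Type*} [NormedAddCommGroup E] [NormedSpace ℝ E]
  [NormedAddCommGroup F] [NormedSpace ℝ F]
  {U : E →L[ℝ] F} {M : Submodule ℝ E} {c : ℝ}

theorem injective_submoduleMap_of_mul_norm_le (hc : 0 < c) (hU : ∀ x ∈ M, c * ‖x‖ ≤ ‖U x‖) :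
    Function.Injective ((U : E →ₗ[ℝ] F).submoduleMap M) := by
  refine (injective_iff_map_eq_zero _).mpr fun x hx => ?_
  have h := hU x x.2
  rw [show U x = 0 from congrArg Subtype.val hx, norm_zero] at h
  exact norm_eq_zero.mp (le_antisymm (nonpos_of_mul_nonpos_right h hc) (norm_nonneg _))

theorem isClosed_map_of_mul_norm_le [CompleteSpace E] (hMc : IsClosed (M : Set E)) (hc : 0 < c)
    (hU : ∀ x ∈ M, c * ‖x‖ ≤ ‖U x‖) : IsClosed (M.map (U : E →ₗ[ℝ] F) : Set F) := by
  have : CompleteSpace M := hMc.completeSpace_coe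
  have hrange : Set.range (U.comp M.subtypeL) = M.map (U : E →ₗ[ℝ] F) := by
    rw [Submodule.map_coe, ← Subtype.range_coe (s := (M : Set E)), ← Set.range_comp]; rfl
  rw [← hrange]
  refine ((U.comp M.subtypeL).antilipschitz_of_bound (K := ⟨c⁻¹, by positivity⟩) fun x => ?_)
    |>.isClosed_range (U.comp M.subtypeL).uniformContinuous
  change ‖(x : E)‖ ≤ c⁻¹ * ‖U x‖
  rw [inv_mul_eq_div, le_div_iff₀ hc, mul_comm]
  exact hU x x.2

theorem not_finiteDimensional_map_of_mul_norm_le (hc : 0 < c) (hU : ∀ x ∈ M, c * ‖x‖ ≤ ‖U x‖)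
    (hM : ¬ FiniteDimensional ℝ M) : ¬ FiniteDimensional ℝ (M.map (U : E →ₗ[ℝ] F)) := fun _ =>
  hM (.of_injective _ (injective_submoduleMap_of_mul_norm_le hc hU))

end BoundedBelow

section Annihilator

variable {E F : Type*} [NormedAddCommGroup E] [NormedSpace ℝ E]
  [NormedAddCommGroup F] [NormedSpace ℝ F]

theorem isClosed_annih (M : Submodule ℝ F) : IsClosed (annih M : Set (StrongDual ℝ F)) := by
  have : (annih M : Set (StrongDual ℝ F)) = ⋂ x ∈ M, {g | g x = 0} := by
    ext g; simp [annih]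
  rw [this]
  exact isClosed_biInter fun x _ => isClosed_eq (continuous_eval_const x) continuous_const

theorem adjOp_injective {Q : E →L[ℝ] F} (hQ : Function.Surjective Q) :
    Function.Injective (adjOp Q) := fun _ _ hgh =>
  ContinuousLinearMap.ext <| hQ.forall.mpr <| DFunLike.congr_fun hgh

theorem adjOp_mem_annih_ker (Q : E →L[ℝ] F) (g : StrongDual ℝ F) :
    adjOp Q g ∈ annih (LinearMap.ker (Q : E →ₗ[ℝ] F)) := fun x hx => by
  change g (Q x) = 0
  rw [show Q x = 0 from hx, map_zero]

theorem not_finiteDimensional_annih_ker {Q : E →L[ℝ] F} (hQ : Function.Surjective Q)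
    (hF : ¬ FiniteDimensional ℝ F) :
    ¬ FiniteDimensional ℝ (annih (LinearMap.ker (Q : E →ₗ[ℝ] F))) := by
  intro
  refine not_finiteDimensional_strongDual hF
    (.of_injective (V₂ := annih (LinearMap.ker (Q : E →ₗ[ℝ] F)))
      ((adjOp Q : StrongDual ℝ F →ₗ[ℝ] StrongDual ℝ E).codRestrict _ (adjOp_mem_annih_ker Q)) ?_)
  intro _ _ hgh
  exact adjOp_injective hQ (congrArg Subtype.val hgh)

theorem not_finiteDimensional_annih_ker_of_range {P : F →L[ℝ] F}
    (hP : ¬ FiniteDimensional ℝ (LinearMap.range (P : F →ₗ[ℝ] F))) :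
    ¬ FiniteDimensional ℝ (annih (LinearMap.ker (P : F →ₗ[ℝ] F))) := by
  have := not_finiteDimensional_annih_ker (Q := P.rangeRestrict)
    (P : F →ₗ[ℝ] F).surjective_rangeRestrict hP
  rwa [ContinuousLinearMap.ker_codRestrict] at this

theorem mul_norm_le_opNorm_mul_norm_adjOp {T : E →L[ℝ] F} {M : Submodule ℝ E} {c : ℝ}
    (hc : 0 < c) (hT : ∀ x ∈ M, c * ‖x‖ ≤ ‖T x‖) {P : F →L[ℝ] F} (hP : ∀ y, P (P y) = P y)
    (hPM : LinearMap.range (P : F →ₗ[ℝ] F) ≤ M.map (T : E →ₗ[ℝ] F)) {g : StrongDual ℝ F}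
    (hg : g ∈ annih (LinearMap.ker (P : F →ₗ[ℝ] F))) :
    c * ‖g‖ ≤ ‖P‖ * ‖adjOp T g‖ := by
  have hbound (y : F) : ‖g y‖ ≤ ‖P‖ * ‖adjOp T g‖ / c * ‖y‖ := by
    obtain ⟨x, hxM, hTx⟩ := hPM (LinearMap.mem_range_self _ y)
    have hgy : g y = adjOp T g x := by
      have hker : y - P y ∈ LinearMap.ker (P : F →ₗ[ℝ] F) := by
        simp [hP]
      have := hg _ hker
      rw [map_sub, sub_eq_zero] at this
      rw [this]
      exact congrArg g hTx.symm
    have hx : ‖x‖ ≤ ‖P‖ * ‖y‖ / c := by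
      rw [le_div_iff₀ hc, mul_comm]
      calc c * ‖x‖ ≤ ‖T x‖ := hT x hxM
        _ = ‖P y‖ := congrArg norm hTx
        _ ≤ ‖P‖ * ‖y‖ := P.le_opNorm y
    calc ‖g y‖ = ‖adjOp T g x‖ := congrArg norm hgy
      _ ≤ ‖adjOp T g‖ * ‖x‖ := (adjOp T g).le_opNorm x
      _ ≤ ‖adjOp T g‖ * (‖P‖ * ‖y‖ / c) := by gcongr
      _ = ‖P‖ * ‖adjOp T g‖ / c * ‖y‖ := by ring
  have := g.opNorm_le_bound (by positivity) hbound
  rwa [le_div_iff₀ hc, mul_comm] at this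

end Annihilator

theorem stmt14_general {X Y : Type*} [NormedAddCommGroup X] [NormedSpace ℝ X] [CompleteSpace X]
    [NormedAddCommGroup Y] [NormedSpace ℝ Y] (lam : ℝ) (hlam : 1 ≤ lam) (hY : Subprojective lam Y)
    (T : X →L[ℝ] Y) : SS T ≤ lam * SS (adjOp T) := by
  have hlam0 : 0 < lam := one_pos.trans_le hlam
  have hrhs : 0 ≤ lam * SS (adjOp T) := mul_nonneg hlam0.le (SS_nonneg _)
  refine SS_le T hrhs fun M hMc hM => ?_
  set c := lowerBoundOn T M
  rcases le_or_gt c 0 with hc | hc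
  · exact hc.trans hrhs
  have hT : ∀ x ∈ M, c * ‖x‖ ≤ ‖T x‖ := fun x hx => lowerBoundOn_mul_norm_le T hx
  obtain ⟨N, hNM, -, hN, P, hPnorm, hPN, hP⟩ :=
    hY _ (isClosed_map_of_mul_norm_le hMc hc hT) (not_finiteDimensional_map_of_mul_norm_le hc hT hM)
  have hdual := not_finiteDimensional_annih_ker_of_range (hPN ▸ hN)
  have hkey : c / lam ≤ lowerBoundOn (adjOp T) (annih (LinearMap.ker (P : Y →ₗ[ℝ] Y))) := by
    refine le_lowerBoundOn _ (Submodule.ne_bot_of_not_finiteDimensional hdual) fun g hg hg1 => ?_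
    rw [div_le_iff₀ hlam0, mul_comm]
    calc c = c * ‖g‖ := by rw [hg1, mul_one]
      _ ≤ ‖P‖ * ‖adjOp T g‖ := mul_norm_le_opNorm_mul_norm_adjOp hc hT hP (hPN ▸ hNM) hg
      _ ≤ lam * ‖adjOp T g‖ := by gcongr
  calc c = lam * (c / lam) := by field_simp
    _ ≤ lam * lowerBoundOn (adjOp T) (annih (LinearMap.ker (P : Y →ₗ[ℝ] Y))) := by gcongr
    _ ≤ lam * SS (adjOp T) := by
      gcongr
      exact lowerBoundOn_le_SS _ (isClosed_annih _) hdual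

theorem stmt14 {X Y : Type*} [NormedAddCommGroup X] [NormedSpace ℝ X] [CompleteSpace X]
    [NormedAddCommGroup Y] [NormedSpace ℝ Y] [CompleteSpace Y] (lam : ℝ) (hlam : 1 ≤ lam) (hY : Subprojective lam Y)
    (T : X →L[ℝ] Y) : SS T ≤ lam * SS (adjOp T) :=
  stmt14_general lam hlam hY T
end

section
/- Let X be a λ-superprojective Banach space and T: X → Y a bounded operator. Then SCS(T) ≤ (1+λ)·SCS(T*). -/
open NormedSpace Metric Set Filter
open scoped ENNReal

/-!
Fix `N` with `Q_N T` surjective and `d • B ⊆ Q_N T (B)`. Then `K = T⁻¹(N)` has infinite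
codimension, so superprojectivity gives a projection `P` with `‖P‖ ≤ λ` onto an
infinite-codimensional `M ⊇ K`. For `f ∈ X*` the functional `f ∘ (I - P)` vanishes on `K`, hence
factors as `g ∘ Q_N T` with `‖g‖ ≤ (1 + λ) ‖f‖ / d`: thus `T* g ≡ f` modulo `P* X*`. Since
`P* X*` is closed and of infinite codimension (its quotient maps onto `(ker P)*` by
Hahn–Banach), this gives `δ(Q_{P* X*} T*) ≥ d / (1 + λ)`.
-/

section CoversBall

variable {X W : Type*}

/-- `d • B_W ⊆ S (B_X)`, the condition whose supremum over `d > 0` is `deltaQ S`. -/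
def CoversBall [Norm X] [Norm W] (S : X → W) (d : ℝ) : Prop :=
  ∀ w : W, ‖w‖ ≤ d → ∃ x : X, ‖x‖ ≤ 1 ∧ S x = w

lemma CoversBall.le_of_norm_le [Norm X] [NormedAddCommGroup W] [NormedSpace ℝ W] [Nontrivial W]
    {S : X → W} {C d : ℝ} (hS : CoversBall S d) (hd : 0 ≤ d) (hC : ∀ x, ‖x‖ ≤ 1 → ‖S x‖ ≤ C) :
    d ≤ C := by
  obtain ⟨w, hw⟩ := exists_norm_eq W hd
  obtain ⟨x, hx, rfl⟩ := hS w hw.le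
  exact hw ▸ hC x hx

variable [NormedAddCommGroup X]

lemma deltaQ_nonneg [SeminormedAddCommGroup W] (S : X → W) : 0 ≤ deltaQ S :=
  Real.sSup_nonneg fun _ hd => hd.1.le

lemma deltaQ_le [SeminormedAddCommGroup W] {S : X → W} {C : ℝ} (hC : 0 ≤ C)
    (h : ∀ d, 0 < d → CoversBall S d → d ≤ C) : deltaQ S ≤ C :=
  Real.sSup_le (fun d hd => h d hd.1 hd.2) hC

lemma CoversBall.le_deltaQ [SeminormedAddCommGroup W] {S : X → W} {C d : ℝ}
    (hC : ∀ d', 0 < d' → CoversBall S d' → d' ≤ C) (hS : CoversBall S d) (hd : 0 < d) :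
    d ≤ deltaQ S :=
  le_csSup ⟨C, fun d' hd' => hC d' hd'.1 hd'.2⟩ ⟨hd, hS⟩

theorem CoversBall.exists_comp_eq [NormedSpace ℝ X] [NormedAddCommGroup W] [NormedSpace ℝ W]
    {S : X →L[ℝ] W} {d : ℝ} (hS : CoversBall S d) (hd : 0 < d) (hsurj : Function.Surjective S)
    (f : StrongDual ℝ X) (hf : LinearMap.ker (S : X →ₗ[ℝ] W) ≤ LinearMap.ker (f : X →ₗ[ℝ] ℝ)) :
    ∃ g : StrongDual ℝ W, g.comp S = f ∧ ‖g‖ ≤ ‖f‖ / d := by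
  let g : W →ₗ[ℝ] ℝ := (LinearMap.ker (S : X →ₗ[ℝ] W)).liftQ (f : X →ₗ[ℝ] ℝ) hf ∘ₗ
    ((S : X →ₗ[ℝ] W).quotKerEquivOfSurjective hsurj).symm.toLinearMap
  have hgS : ∀ x, g (S x) = f x := fun x => by
    simp only [g, LinearMap.comp_apply, LinearEquiv.coe_coe]
    rw [← ContinuousLinearMap.coe_coe S, LinearMap.quotKerEquivOfSurjective_symm_apply]
    rfl
  have hball : ∀ w ∈ closedBall (0 : W) d, ‖g w‖ ≤ ‖f‖ := by
    intro w hw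
    obtain ⟨x, hx, rfl⟩ := hS w (mem_closedBall_zero_iff.1 hw)
    rw [hgS]
    exact (f.le_of_opNorm_le_of_le le_rfl hx).trans_eq (mul_one _)
  refine ⟨g.mkContinuous _ (g.bound_of_ball_bound' hd _ hball), ?_, ?_⟩
  · ext x
    exact hgS x
  · exact LinearMap.mkContinuous_norm_le _ (by positivity) _

end CoversBall

lemma Module.Finite.quotient_of_quotient_comap {R M M₂ : Type*} [Ring R] [AddCommGroup M]
    [Module R M] [AddCommGroup M₂] [Module R M₂] {f : M →ₗ[R] M₂} {N : Submodule R M₂}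
    [Module.Finite R (M ⧸ N.comap f)] (hsurj : Function.Surjective (N.mkQ ∘ f)) :
    Module.Finite R (M₂ ⧸ N) :=
  Module.Finite.of_surjective ((N.comap f).mapQ N f le_rfl) fun q =>
    let ⟨x, hx⟩ := hsurj q
    ⟨Submodule.Quotient.mk x, hx⟩

lemma Module.nontrivial_of_not_finite {R M : Type*} [Semiring R] [AddCommMonoid M] [Module R M]
    (h : ¬ Module.Finite R M) : Nontrivial M := by
  by_contra h'
  rw [not_nontrivial_iff_subsingleton] at h'
  exact h inferInstance

lemma FiniteDimensional.of_strongDual (𝕜 : Type*) [RCLike 𝕜] {E : Type*}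
    [NormedAddCommGroup E] [NormedSpace 𝕜 E] [FiniteDimensional 𝕜 (StrongDual 𝕜 E)] :
    FiniteDimensional 𝕜 E :=
  have : FiniteDimensional 𝕜 (StrongDual 𝕜 (StrongDual 𝕜 E)) :=
    ContinuousLinearMap.finiteDimensional
  FiniteDimensional.of_injective (inclusionInDoubleDualLi 𝕜 (E := E)).toLinearMap
    (inclusionInDoubleDualLi 𝕜).injective

section SCS

variable {X Y : Type*} [NormedAddCommGroup X] [NormedSpace ℝ X]
  [NormedAddCommGroup Y] [NormedSpace ℝ Y]

lemma SCS_nonneg (U : X →L[ℝ] Y) : 0 ≤ SCS U :=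
  Real.sSup_nonneg <| by
    rintro _ ⟨N, -, -, -, rfl⟩
    exact deltaQ_nonneg _

lemma SCS_le {U : X →L[ℝ] Y} {C : ℝ} (hC : 0 ≤ C)
    (h : ∀ N : Submodule ℝ Y, IsClosed (N : Set Y) → ¬ FiniteDimensional ℝ (Y ⧸ N) →
      Function.Surjective (fun x => (Submodule.Quotient.mk (U x) : Y ⧸ N)) →
      ∀ d, 0 < d → CoversBall (fun x => (Submodule.Quotient.mk (U x) : Y ⧸ N)) d → d ≤ C) :
    SCS U ≤ C :=
  Real.sSup_le (by
    rintro _ ⟨N, hN, hfin, hsurj, rfl⟩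
    exact deltaQ_le hC (h N hN hfin hsurj)) hC

lemma CoversBall.le_opNorm (U : X →L[ℝ] Y) {N : Submodule ℝ Y} (hN : IsClosed (N : Set Y))
    (hfin : ¬ FiniteDimensional ℝ (Y ⧸ N)) {d : ℝ} (hd : 0 ≤ d)
    (hS : CoversBall (fun x => (Submodule.Quotient.mk (U x) : Y ⧸ N)) d) : d ≤ ‖U‖ :=
  have : IsClosed (N : Set Y) := hN
  have := Module.nontrivial_of_not_finite hfin
  hS.le_of_norm_le hd fun x hx =>
    (Submodule.Quotient.norm_mk_le N (U x)).trans <|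
      (U.le_of_opNorm_le_of_le le_rfl hx).trans_eq (mul_one _)

lemma deltaQ_le_SCS (U : X →L[ℝ] Y) {N : Submodule ℝ Y} (hN : IsClosed (N : Set Y))
    (hfin : ¬ FiniteDimensional ℝ (Y ⧸ N))
    (hsurj : Function.Surjective (fun x => (Submodule.Quotient.mk (U x) : Y ⧸ N))) :
    deltaQ (fun x => (Submodule.Quotient.mk (U x) : Y ⧸ N)) ≤ SCS U :=
  le_csSup ⟨‖U‖, by
    rintro _ ⟨N, hN, hfin, -, rfl⟩
    exact deltaQ_le (norm_nonneg U) fun d hd hS => hS.le_opNorm U hN hfin hd.le⟩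
    ⟨N, hN, hfin, hsurj, rfl⟩

lemma le_SCS_of_forall_exists_lift (U : X →L[ℝ] Y) {N : Submodule ℝ Y}
    (hN : IsClosed (N : Set Y)) (hfin : ¬ FiniteDimensional ℝ (Y ⧸ N)) {c : ℝ}
    (hlift : ∀ y, ∃ x, U x - y ∈ N ∧ c * ‖x‖ ≤ ‖y‖) : c ≤ SCS U := by
  have hsurj : Function.Surjective (fun x => (Submodule.Quotient.mk (U x) : Y ⧸ N)) := by
    intro q
    obtain ⟨y, rfl⟩ := Submodule.Quotient.mk_surjective N q
    obtain ⟨x, hx, -⟩ := hlift y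
    exact ⟨x, (Submodule.Quotient.eq N).2 hx⟩
  have hcov : ∀ d < c, CoversBall (fun x => (Submodule.Quotient.mk (U x) : Y ⧸ N)) d := by
    intro d hdc w hw
    obtain ⟨y, rfl, hy⟩ := Submodule.Quotient.norm_mk_lt w (sub_pos.2 hdc)
    obtain ⟨x, hxy, hx⟩ := hlift y
    have hc : 0 < c := by linarith [norm_nonneg y]
    refine ⟨x, ?_, (Submodule.Quotient.eq N).2 hxy⟩
    nlinarith
  refine le_of_forall_lt_imp_le_of_dense fun d hdc => ?_
  rcases le_or_gt d 0 with hd | hd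
  · exact hd.trans (SCS_nonneg U)
  · exact ((hcov d hdc).le_deltaQ (fun _ hd' hS => hS.le_opNorm U hN hfin hd'.le) hd).trans
      (deltaQ_le_SCS U hN hfin hsurj)

end SCS

section Dual

variable {X Y : Type*} [NormedAddCommGroup X] [NormedSpace ℝ X]
  [NormedAddCommGroup Y] [NormedSpace ℝ Y]

@[simp]
lemma adjOp_apply (T : X →L[ℝ] Y) (g : StrongDual ℝ Y) : adjOp T g = g.comp T := rfl

lemma IsIdempotentElem.adjOp {P : X →L[ℝ] X} (hP : IsIdempotentElem P) :
    IsIdempotentElem (adjOp P) := by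
  ext f x
  exact congrArg f (DFunLike.congr_fun hP x)

lemma finiteDimensional_quotient_range_of_adjOp {P : X →L[ℝ] X} (hP : IsIdempotentElem P)
    [FiniteDimensional ℝ
      (StrongDual ℝ X ⧸ LinearMap.range (adjOp P : StrongDual ℝ X →ₗ[ℝ] StrongDual ℝ X))] :
    FiniteDimensional ℝ (X ⧸ LinearMap.range (P : X →ₗ[ℝ] X)) := by
  let K := LinearMap.ker (P : X →ₗ[ℝ] X)
  let restrict : StrongDual ℝ X →ₗ[ℝ] StrongDual ℝ K := adjOp K.subtypeL
  have hle : LinearMap.range (adjOp P : StrongDual ℝ X →ₗ[ℝ] StrongDual ℝ X) ≤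
      LinearMap.ker restrict := by
    rintro _ ⟨g, rfl⟩
    ext v
    simp [restrict, show P v = 0 from v.2]
  have hsurj : Function.Surjective (Submodule.liftQ _ restrict hle) := fun φ =>
    let ⟨g, hg, _⟩ := exists_extension_norm_eq K φ
    ⟨Submodule.Quotient.mk g, ContinuousLinearMap.ext hg⟩
  have := Module.Finite.of_surjective _ hsurj
  have := FiniteDimensional.of_strongDual ℝ (E := K)
  have hcompl :=
    LinearMap.IsIdempotentElem.isCompl (ContinuousLinearMap.IsIdempotentElem.toLinearMap hP)
  exact Module.Finite.equiv (Submodule.quotientEquivOfIsCompl _ _ hcompl).symm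

theorem exists_adjOp_eq_sub_adjOp (T : X →L[ℝ] Y) {N : Submodule ℝ Y} (hN : IsClosed (N : Set Y))
    (hsurj : Function.Surjective (fun x => (Submodule.Quotient.mk (T x) : Y ⧸ N))) {d : ℝ}
    (hd : 0 < d) (hcov : CoversBall (fun x => (Submodule.Quotient.mk (T x) : Y ⧸ N)) d)
    {P : X →L[ℝ] X} (hfix : ∀ x, T x ∈ N → P x = x) (f : StrongDual ℝ X) :
    ∃ g : StrongDual ℝ Y, adjOp T g = f - adjOp P f ∧ d / (1 + ‖P‖) * ‖g‖ ≤ ‖f‖ := by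
  have : IsClosed (N : Set Y) := hN
  have hker : LinearMap.ker (N.mkQL.comp T : X →ₗ[ℝ] Y ⧸ N) ≤
      LinearMap.ker (f.comp (ContinuousLinearMap.id ℝ X - P) : X →ₗ[ℝ] ℝ) := by
    intro x hx
    have hTx : T x ∈ N := (Submodule.Quotient.mk_eq_zero N).1 hx
    simp [hfix x hTx]
  obtain ⟨g, hgT, hg⟩ := CoversBall.exists_comp_eq (S := N.mkQL.comp T) hcov hd hsurj _ hker
  refine ⟨g.comp N.mkQL, ?_, ?_⟩
  · ext x
    simpa using DFunLike.congr_fun hgT x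
  have hmkQL : ‖g.comp N.mkQL‖ ≤ ‖g‖ :=
    ContinuousLinearMap.opNorm_le_bound _ (norm_nonneg g) fun y =>
      (g.le_opNorm _).trans (mul_le_mul_of_nonneg_left (Submodule.Quotient.norm_mk_le N y)
        (norm_nonneg g))
  have hproj : ‖f.comp (ContinuousLinearMap.id ℝ X - P)‖ ≤ ‖f‖ * (1 + ‖P‖) :=
    (f.opNorm_comp_le _).trans <| mul_le_mul_of_nonneg_left
      ((norm_sub_le _ _).trans (add_le_add_left ContinuousLinearMap.norm_id_le _)) (norm_nonneg f)
  calc d / (1 + ‖P‖) * ‖g.comp N.mkQL‖ ≤ d / (1 + ‖P‖) * (‖f‖ * (1 + ‖P‖) / d) := by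
        gcongr
        exact hmkQL.trans (hg.trans (by gcongr))
    _ = ‖f‖ := by field_simp

end Dual

theorem stmt17_general {X Y : Type*} [NormedAddCommGroup X] [NormedSpace ℝ X]
    [NormedAddCommGroup Y] [NormedSpace ℝ Y] (lam : ℝ) (hlam : 1 ≤ lam) (h : Superprojective lam X)
    (T : X →L[ℝ] Y) : SCS T ≤ (1 + lam) * SCS (adjOp T) := by
  have hSCS := SCS_nonneg (adjOp T)
  refine SCS_le (by positivity) fun N hN hfin hsurj d hd hcov => ?_
  obtain ⟨M, hKM, -, hMfin, P, hPlam, rfl, hPi⟩ :=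
    h (N.comap (T : X →ₗ[ℝ] Y)) (hN.preimage T.continuous)
      fun _ => hfin (Module.Finite.quotient_of_quotient_comap hsurj)
  have hP : IsIdempotentElem P := ContinuousLinearMap.ext hPi
  have hfix : ∀ x, T x ∈ N → P x = x := fun x hx => by
    obtain ⟨y, rfl⟩ := hKM hx
    exact hPi y
  have hdual : d / (1 + ‖P‖) ≤ SCS (adjOp T) :=
    le_SCS_of_forall_exists_lift (adjOp T)
      (ContinuousLinearMap.IsIdempotentElem.isClosed_range hP.adjOp)
      (fun _ => hMfin (finiteDimensional_quotient_range_of_adjOp hP)) fun f =>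
        (exists_adjOp_eq_sub_adjOp T hN hsurj hd hcov hfix f).imp fun g ⟨hg, hnorm⟩ =>
          ⟨by rw [hg, sub_sub_cancel_left]; exact neg_mem ⟨f, rfl⟩, hnorm⟩
  calc d = (1 + ‖P‖) * (d / (1 + ‖P‖)) := by field_simp
    _ ≤ (1 + ‖P‖) * SCS (adjOp T) := by gcongr
    _ ≤ (1 + lam) * SCS (adjOp T) := by gcongr

theorem stmt17 {X Y : Type*} [NormedAddCommGroup X] [NormedSpace ℝ X] [CompleteSpace X]
    [NormedAddCommGroup Y] [NormedSpace ℝ Y] [CompleteSpace Y] (lam : ℝ) (hlam : 1 ≤ lam) (h : Superprojective lam X)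
    (T : X →L[ℝ] Y) : SCS T ≤ (1 + lam) * SCS (adjOp T) :=
  stmt17_general lam hlam h T
end

section
/- Let (x_n) be a basis for a Banach space X with coefficient functionals (x_n*), and (y_n) a semi-normalized weakly null sequence in X. Then for every ε > 0 there exist a subsequence (y_{k_n}) and a block basic sequence (z_n) with respect to (x_n) such that (1−ε)‖Σ a_i z_i‖ ≤ ‖Σ a_i y_{k_i}‖ ≤ (1+ε)‖Σ a_i z_i‖ for all finitely many scalars a_i. -/
open NormedSpace Metric Set Filter
open scoped ENNReal

/-!
Gliding hump. By Banach–Steinhaus the basis projections `S m = ∑ j < m, x_j^* ⊗ x_j` are bounded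
by some `K`. Weak nullity makes the heads `S m (y n)` small for large `n`, and the tails
`y n - S m (y n)` are small for large `m`, so choosing `k i` and `p (i + 1)` alternately makes
`y (k i)` `δ i`-close to its block `z i` on `(p i, p (i + 1)]`. The block projections have norm
at most `2 K` and `‖z i‖ ≥ c / 2`, so `|a i| ≤ (4 K / c) ‖∑ a j • z j‖`; hence if
`∑ δ i ≤ ε c / (4 K)` then `‖∑ a i • (y (k i) - z i)‖ ≤ ε ‖∑ a i • z i‖`.
-/

theorem Monotone.pairwise_disjoint_on_finset_Ioc_succ {p : ℕ → ℕ} (hp : Monotone p) :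
    Pairwise (Function.onFun Disjoint fun i => Finset.Ioc (p i) (p (i + 1))) := fun i j hij => by
  simpa [Function.onFun, ← Finset.disjoint_coe] using hp.pairwise_disjoint_on_Ioc_succ hij

theorem StrictMono.findGreatest_lt_eq {p : ℕ → ℕ} (hp : StrictMono p) {i j : ℕ}
    (hj : j ∈ Finset.Ioc (p i) (p (i + 1))) : Nat.findGreatest (fun i => p i < j) j = i := by
  rw [Finset.mem_Ioc] at hj
  refine Nat.findGreatest_eq_iff.2 ⟨hp.le_apply.trans hj.1.le, fun _ => hj.1, fun n hin _ hpn => ?_⟩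
  have : p (i + 1) ≤ p n := hp.monotone hin
  omega

theorem exists_strictMono_interlaced {H T : ℕ → ℕ → ℕ → Prop}
    (hH : ∀ i m, ∀ᶠ n in atTop, H i m n) (hT : ∀ i n, ∀ᶠ m in atTop, T i n m) :
    ∃ k p : ℕ → ℕ, StrictMono k ∧ StrictMono p ∧
      ∀ i, H i (p i) (k i) ∧ T i (k i) (p (i + 1)) := by
  have step : ∀ i (s : ℕ × ℕ), ∃ t : ℕ × ℕ, s.1 < t.1 ∧ s.2 < t.2 ∧ H i s.2 t.1 ∧ T i t.1 t.2 :=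
    fun i s => by
      obtain ⟨n, hn, hsn⟩ := ((hH i s.2).and (eventually_gt_atTop s.1)).exists
      obtain ⟨m, hm, hsm⟩ := ((hT i n).and (eventually_gt_atTop s.2)).exists
      exact ⟨(n, m), hsn, hsm, hn, hm⟩
  choose F hF using step
  -- `st i = (k (i - 1), p i)`, started from `(0, 0)`
  let st : ℕ → ℕ × ℕ := fun i => Nat.rec (motive := fun _ => ℕ × ℕ) (0, 0) F i
  refine ⟨fun i => (st (i + 1)).1, fun i => (st i).2, strictMono_nat_of_lt_succ fun i => ?_,
    strictMono_nat_of_lt_succ fun i => (hF i (st i)).2.1, fun i => (hF i (st i)).2.2⟩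
  exact (hF (i + 1) (st (i + 1))).1

section SmallPerturbation

variable {X : Type*} [NormedAddCommGroup X] [NormedSpace ℝ X]
  {z : ℕ → X} {P : ℕ → X →L[ℝ] X} {M r : ℝ}

theorem abs_mul_le_norm_sum_smul (hP : ∀ i, ‖P i‖ ≤ M)
    (hPz : ∀ i j, P i (z j) = if i = j then z j else 0) (hz : ∀ i, r ≤ ‖z i‖)
    (a : ℕ → ℝ) {n i : ℕ} (hi : i < n) :
    |a i| * r ≤ M * ‖∑ j ∈ Finset.range n, a j • z j‖ := by
  have hPi : P i (∑ j ∈ Finset.range n, a j • z j) = a i • z i := by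
    simp [map_sum, hPz, hi]
  calc |a i| * r ≤ ‖a i • z i‖ := by
        rw [norm_smul, Real.norm_eq_abs]; exact mul_le_mul_of_nonneg_left (hz i) (abs_nonneg _)
    _ = ‖P i (∑ j ∈ Finset.range n, a j • z j)‖ := by rw [hPi]
    _ ≤ M * ‖∑ j ∈ Finset.range n, a j • z j‖ :=
        (P i).le_of_opNorm_le (hP i) _

theorem norm_sum_smul_sub_le (hr : 0 < r) (hP : ∀ i, ‖P i‖ ≤ M)
    (hPz : ∀ i j, P i (z j) = if i = j then z j else 0) (hz : ∀ i, r ≤ ‖z i‖)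
    (w : ℕ → X) (n : ℕ) (a : ℕ → ℝ) :
    ‖∑ i ∈ Finset.range n, a i • w i - ∑ i ∈ Finset.range n, a i • z i‖ ≤
      M / r * (∑ i ∈ Finset.range n, ‖w i - z i‖) * ‖∑ i ∈ Finset.range n, a i • z i‖ := by
  set Z := ∑ i ∈ Finset.range n, a i • z i
  rw [← Finset.sum_sub_distrib, mul_right_comm, Finset.mul_sum]
  refine (norm_sum_le _ _).trans (Finset.sum_le_sum fun i hi => ?_)
  have ha : |a i| ≤ M / r * ‖Z‖ := by
    rw [div_mul_eq_mul_div, le_div_iff₀ hr]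
    exact abs_mul_le_norm_sum_smul hP hPz hz a (Finset.mem_range.1 hi)
  rw [← smul_sub, norm_smul, Real.norm_eq_abs]
  exact mul_le_mul_of_nonneg_right ha (norm_nonneg _)

theorem norm_sum_smul_equiv_of_small_perturbation {ε : ℝ} (hr : 0 < r) (hP : ∀ i, ‖P i‖ ≤ M)
    (hPz : ∀ i j, P i (z j) = if i = j then z j else 0) (hz : ∀ i, r ≤ ‖z i‖)
    {w : ℕ → X} (hwz : ∀ n, M / r * ∑ i ∈ Finset.range n, ‖w i - z i‖ ≤ ε)
    (n : ℕ) (a : ℕ → ℝ) :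
    (1 - ε) * ‖∑ i ∈ Finset.range n, a i • z i‖ ≤ ‖∑ i ∈ Finset.range n, a i • w i‖ ∧
      ‖∑ i ∈ Finset.range n, a i • w i‖ ≤ (1 + ε) * ‖∑ i ∈ Finset.range n, a i • z i‖ := by
  have h := (norm_sum_smul_sub_le hr hP hPz hz w n a).trans
    (mul_le_mul_of_nonneg_right (hwz n) (norm_nonneg _))
  have h' := abs_le.1 ((abs_norm_sub_norm_le _ _).trans h)
  constructor <;> linarith [h'.1, h'.2]

end SmallPerturbation

section CoordinateProjections

variable {X : Type*} [NormedAddCommGroup X] [NormedSpace ℝ X]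
  (x : ℕ → X) (xstar : ℕ → StrongDual ℝ X)

def coordProj (s : Finset ℕ) : X →L[ℝ] X :=
  ∑ j ∈ s, (xstar j).smulRight (x j)

@[simp]
theorem coordProj_apply (s : Finset ℕ) (v : X) :
    coordProj x xstar s v = ∑ j ∈ s, xstar j v • x j := by
  simp [coordProj]

variable {x xstar}

theorem coord_sum_smul (hcoeff : ∀ m n, xstar m (x n) = if m = n then 1 else 0)
    (j : ℕ) (t : Finset ℕ) (b : ℕ → ℝ) :
    xstar j (∑ l ∈ t, b l • x l) = if j ∈ t then b j else 0 := by
  simp [hcoeff]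

theorem coordProj_sum_smul (hcoeff : ∀ m n, xstar m (x n) = if m = n then 1 else 0)
    (s t : Finset ℕ) (b : ℕ → ℝ) :
    coordProj x xstar s (∑ l ∈ t, b l • x l) = ∑ l ∈ s ∩ t, b l • x l := by
  classical
  simp only [coordProj_apply, coord_sum_smul hcoeff, ite_smul, zero_smul, Finset.sum_ite_mem]

theorem coordProj_Ioc {m n : ℕ} (hmn : m ≤ n) :
    coordProj x xstar (Finset.Ioc m n) =
      coordProj x xstar (Finset.range (n + 1)) - coordProj x xstar (Finset.range (m + 1)) := by
  rw [coordProj, coordProj, coordProj, ← Finset.Ico_add_one_add_one_eq_Ioc,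
    Finset.sum_Ico_eq_sub _ (by omega)]

theorem tendsto_coordProj_range
    (hbasis : ∀ v : X, ∃! a : ℕ → ℝ,
      Tendsto (fun n => ∑ i ∈ Finset.range n, a i • x i) atTop (nhds v))
    (hcoeff : ∀ m n, xstar m (x n) = if m = n then 1 else 0) (v : X) :
    Tendsto (fun m => coordProj x xstar (Finset.range m) v) atTop (nhds v) := by
  obtain ⟨a, ha, -⟩ := hbasis v
  suffices hax : ∀ j, xstar j v = a j by simpa only [coordProj_apply, hax] using ha
  intro j
  refine tendsto_nhds_unique (((xstar j).continuous.tendsto v).comp ha)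
    (tendsto_const_nhds.congr' ?_)
  filter_upwards [eventually_gt_atTop j] with n hn
  simp [coord_sum_smul hcoeff, hn]

theorem exists_pos_bound_norm_coordProj_range [CompleteSpace X]
    (hbasis : ∀ v : X, ∃! a : ℕ → ℝ,
      Tendsto (fun n => ∑ i ∈ Finset.range n, a i • x i) atTop (nhds v))
    (hcoeff : ∀ m n, xstar m (x n) = if m = n then 1 else 0) :
    ∃ K, 0 < K ∧ ∀ m, ‖coordProj x xstar (Finset.range m)‖ ≤ K := by
  obtain ⟨K, hK⟩ := banach_steinhaus fun v => by
    obtain ⟨C, hC⟩ := (tendsto_coordProj_range hbasis hcoeff v).norm.bddAbove_range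
    exact ⟨C, fun m => hC ⟨m, rfl⟩⟩
  exact ⟨max K 1, by positivity, fun m => (hK m).trans (le_max_left _ _)⟩

theorem norm_coordProj_Ioc_le {K : ℝ} (hK : ∀ m, ‖coordProj x xstar (Finset.range m)‖ ≤ K)
    {m n : ℕ} (hmn : m ≤ n) : ‖coordProj x xstar (Finset.Ioc m n)‖ ≤ 2 * K := by
  rw [coordProj_Ioc hmn, two_mul]
  exact (norm_sub_le _ _).trans (add_le_add (hK _) (hK _))

theorem norm_sub_coordProj_Ioc_le {m n : ℕ} (hmn : m ≤ n) (v : X) :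
    ‖v - coordProj x xstar (Finset.Ioc m n) v‖ ≤
      ‖v - coordProj x xstar (Finset.range (n + 1)) v‖ +
        ‖coordProj x xstar (Finset.range (m + 1)) v‖ := by
  rw [coordProj_Ioc hmn, sub_apply, sub_sub_eq_add_sub, add_sub_right_comm]
  exact norm_add_le _ _

theorem tendsto_coordProj_of_weakly_null {y : ℕ → X}
    (hweak : ∀ f : StrongDual ℝ X, Tendsto (fun n => f (y n)) atTop (nhds 0)) (s : Finset ℕ) :
    Tendsto (fun n => coordProj x xstar s (y n)) atTop (nhds 0) := by
  simpa using tendsto_finsetSum s fun j _ => (hweak (xstar j)).smul_const (x j)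

theorem exists_strictMono_near_blocks
    (hbasis : ∀ v : X, ∃! a : ℕ → ℝ,
      Tendsto (fun n => ∑ i ∈ Finset.range n, a i • x i) atTop (nhds v))
    (hcoeff : ∀ m n, xstar m (x n) = if m = n then 1 else 0) {y : ℕ → X}
    (hweak : ∀ f : StrongDual ℝ X, Tendsto (fun n => f (y n)) atTop (nhds 0))
    {δ : ℕ → ℝ} (hδ : ∀ i, 0 < δ i) :
    ∃ k p : ℕ → ℕ, StrictMono k ∧ StrictMono p ∧ ∀ i,
      ‖y (k i) - coordProj x xstar (Finset.Ioc (p i) (p (i + 1))) (y (k i))‖ ≤ δ i := by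
  obtain ⟨k, p, hk, hp, hkp⟩ := exists_strictMono_interlaced
    (H := fun i m n => ‖coordProj x xstar (Finset.range (m + 1)) (y n)‖ ≤ δ i / 2)
    (T := fun i n m => ‖y n - coordProj x xstar (Finset.range (m + 1)) (y n)‖ ≤ δ i / 2)
    (fun i m => (tendsto_coordProj_of_weakly_null hweak _).norm.eventually
      (ge_mem_nhds (by simpa using hδ i)))
    (fun i n => ((tendsto_coordProj_range hbasis hcoeff (y n)).comp
      (tendsto_add_atTop_nat 1)).const_sub (y n) |>.norm.eventually
        (ge_mem_nhds (by simpa using hδ i)))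
  refine ⟨k, p, hk, hp, fun i => (norm_sub_coordProj_Ioc_le (hp.monotone i.le_succ) _).trans ?_⟩
  linarith [(hkp i).1, (hkp i).2]

end CoordinateProjections

theorem stmt18 {X : Type*} [NormedAddCommGroup X] [NormedSpace ℝ X] [CompleteSpace X] (x : ℕ → X) (xstar : ℕ → StrongDual ℝ X)
    (hbasis : ∀ v : X, ∃! a : ℕ → ℝ,
      Tendsto (fun n => ∑ i ∈ Finset.range n, a i • x i) atTop (nhds v))
    (hcoeff : ∀ m n, xstar m (x n) = if m = n then 1 else 0)
    (y : ℕ → X) (c C : ℝ) (hc : 0 < c)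
    (hy : ∀ n, c ≤ ‖y n‖ ∧ ‖y n‖ ≤ C)
    (hweak : ∀ f : StrongDual ℝ X, Tendsto (fun n => f (y n)) atTop (nhds 0))
    (ε : ℝ) (hε : 0 < ε) :
    ∃ k : ℕ → ℕ, StrictMono k ∧ ∃ p : ℕ → ℕ, StrictMono p ∧ ∃ b : ℕ → ℝ,
      ∀ (n : ℕ) (a : ℕ → ℝ),
        (1 - ε) * ‖∑ i ∈ Finset.range n,
            a i • (∑ j ∈ Finset.Ioc (p i) (p (i + 1)), b j • x j)‖ ≤
          ‖∑ i ∈ Finset.range n, a i • y (k i)‖ ∧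
        ‖∑ i ∈ Finset.range n, a i • y (k i)‖ ≤
          (1 + ε) * ‖∑ i ∈ Finset.range n,
            a i • (∑ j ∈ Finset.Ioc (p i) (p (i + 1)), b j • x j)‖ := by
  obtain ⟨K, hK, hSK⟩ := exists_pos_bound_norm_coordProj_range hbasis hcoeff
  set d := min (c / 2) (ε * c / (4 * K))
  obtain ⟨δ, hδ, hδd⟩ :=
    (countable_univ (α := ℕ)).exists_pos_forall_sum_le (show 0 < d by positivity)
  obtain ⟨k, p, hk, hp, hyz⟩ := exists_strictMono_near_blocks hbasis hcoeff hweak hδ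
  set b := fun j => xstar j (y (k (Nat.findGreatest (fun i => p i < j) j)))
  set z := fun i => ∑ j ∈ Finset.Ioc (p i) (p (i + 1)), b j • x j
  have hz : ∀ i, z i = coordProj x xstar (Finset.Ioc (p i) (p (i + 1))) (y (k i)) := fun i => by
    simp only [z, b, coordProj_apply]
    exact Finset.sum_congr rfl fun j hj => by rw [hp.findGreatest_lt_eq hj]
  have hPz : ∀ i j, coordProj x xstar (Finset.Ioc (p i) (p (i + 1))) (z j) =
      if i = j then z j else 0 := fun i j => by
    split_ifs with hij
    · rw [hij, coordProj_sum_smul hcoeff, Finset.inter_self]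
    · rw [coordProj_sum_smul hcoeff,
        Finset.disjoint_iff_inter_eq_empty.1 (hp.monotone.pairwise_disjoint_on_finset_Ioc_succ hij),
        Finset.sum_empty]
  have hδc : ∀ i, δ i ≤ c / 2 := fun i => by
    simpa using (hδd {i} (subset_univ _)).trans (min_le_left _ _)
  refine ⟨k, hk, p, hp, b, norm_sum_smul_equiv_of_small_perturbation (r := c / 2) (by positivity)
    (fun i => norm_coordProj_Ioc_le hSK (hp.monotone i.le_succ)) hPz (fun i => ?_) fun n => ?_⟩
  · linarith [norm_sub_norm_le (y (k i)) (z i), (hy (k i)).1, hz i ▸ hyz i, hδc i]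
  · calc 2 * K / (c / 2) * ∑ i ∈ Finset.range n, ‖y (k i) - z i‖
        ≤ 2 * K / (c / 2) * d := by
          gcongr
          exact (Finset.sum_le_sum fun i _ => hz i ▸ hyz i).trans (hδd _ (subset_univ _))
      _ ≤ 2 * K / (c / 2) * (ε * c / (4 * K)) := by gcongr; exact min_le_right _ _
      _ = ε := by field_simp; ring
end

section
/- For 1 < p < ∞ and any bounded operator T: ℓ_p → ℓ_p, χ(T*) ≤ SS_{ℓ_p}(T), where SS_{ℓ_p}(T) = sup{(‖S‖·‖(TS)^{-1}‖)^{-1} : S: ℓ_p → ℓ_p bounded with TS an isomorphism onto its range}. -/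
open NormedSpace Metric Set Filter
open scoped ENNReal

/-!
Fix `γ > SS_{ℓ_p}(T)`. If `‖T x‖ ≤ γ ‖x‖` on a finite-codimensional subspace `⋂_{g ∈ G} ker g`,
Hahn–Banach splits every `g ∘ T` with `‖g‖ ≤ 1` into a functional of norm `≤ γ` plus an element
of the compact set `span G ∩ closedBall 0 (‖T‖ + γ)`; a finite net of the latter gives
`χ(T*) ≤ γ`. Otherwise a gliding hump produces unit vectors `v_k` supported on consecutive
blocks of coordinates whose images `T v_k` lie, up to summable errors, on the same blocks and
have norm `≥ γ - ε`. Disjointly supported vectors of `ℓ_p` add like `‖∑ x_k‖^p = ∑ ‖x_k‖^p`,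
so `S e_k = v_k` has `‖S‖ ≤ 1` and `‖T S a‖ ≥ (γ - 2ε) ‖a‖`, contradicting `γ > SS_{ℓ_p}(T)`.
-/

open Function Topology

namespace lp

section DisjointSupports

variable {α ι F : Type*} [NormedAddCommGroup F] {p : ℝ≥0∞}

theorem norm_sum_rpow_of_pairwise_disjoint (hp : 0 < p.toReal)
    {f : ι → lp (fun _ : α => F) p} (hf : Pairwise (Disjoint on fun k => support ⇑(f k)))
    (s : Finset ι) :
    ‖∑ k ∈ s, f k‖ ^ p.toReal = ∑ k ∈ s, ‖f k‖ ^ p.toReal := by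
  have hcoord (i : α) : ‖∑ k ∈ s, f k i‖ ^ p.toReal = ∑ k ∈ s, ‖f k i‖ ^ p.toReal := by
    by_cases hi : ∃ k ∈ s, f k i ≠ 0
    · obtain ⟨k, hks, hki⟩ := hi
      have hzero : ∀ l ∈ s, l ≠ k → f l i = 0 := fun l _ hlk => by
        by_contra hli
        exact Set.disjoint_left.1 (hf hlk) hli hki
      rw [Finset.sum_eq_single_of_mem k hks hzero, Finset.sum_eq_single_of_mem k hks
        fun l hl hlk => by simp [hzero l hl hlk, Real.zero_rpow hp.ne']]
    · push Not at hi
      have h0 : ‖(0 : F)‖ ^ p.toReal = 0 := by simp [Real.zero_rpow hp.ne']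
      rw [Finset.sum_eq_zero hi, Finset.sum_eq_zero fun k hk => by rw [hi k hk, h0], h0]
  rw [lp.norm_rpow_eq_tsum hp, lp.coeFn_sum]
  simp only [Finset.sum_apply, hcoord]
  rw [Summable.tsum_finsetSum fun k _ => (lp.memℓp (f k)).summable hp]
  exact Finset.sum_congr rfl fun k _ => (lp.norm_rpow_eq_tsum hp (f k)).symm

theorem pairwise_disjoint_support_smul [NormedSpace ℝ F] {u : ι → lp (fun _ : α => F) p}
    (hu : Pairwise (Disjoint on fun k => support ⇑(u k))) (a : ι → ℝ) :
    Pairwise (Disjoint on fun k => support ⇑(a k • u k)) := fun _ _ hkl =>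
  (hu hkl).mono (support_const_smul_subset _ _) (support_const_smul_subset _ _)

variable [Fact (1 ≤ p)]

theorem hasSum_norm_rpow_of_pairwise_disjoint (hp : 0 < p.toReal)
    {f : ι → lp (fun _ : α => F) p} (hf : Pairwise (Disjoint on fun k => support ⇑(f k)))
    {y : lp (fun _ : α => F) p} (hy : HasSum f y) :
    HasSum (fun k => ‖f k‖ ^ p.toReal) (‖y‖ ^ p.toReal) :=
  (hy.norm.rpow_const (Or.inr hp.le)).congr (norm_sum_rpow_of_pairwise_disjoint hp hf)

variable [CompleteSpace F]

theorem summable_of_summable_norm_rpow (hp : 0 < p.toReal)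
    {f : ι → lp (fun _ : α => F) p} (hf : Pairwise (Disjoint on fun k => support ⇑(f k)))
    (hfp : Summable fun k => ‖f k‖ ^ p.toReal) : Summable f := by
  refine summable_iff_vanishing_norm.2 fun ε hε => ?_
  obtain ⟨s, hs⟩ := summable_iff_vanishing_norm.1 hfp (ε ^ p.toReal) (by positivity)
  refine ⟨s, fun t hts => ?_⟩
  have h := hs t hts
  rw [Real.norm_of_nonneg (by positivity), ← norm_sum_rpow_of_pairwise_disjoint hp hf] at h
  exact (Real.rpow_lt_rpow_iff (norm_nonneg _) hε.le hp).1 h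

variable [NormedSpace ℝ F] {u : ι → lp (fun _ : α => F) p}

theorem summable_smul_of_pairwise_disjoint (hp : 0 < p.toReal)
    (hu : Pairwise (Disjoint on fun k => support ⇑(u k))) {C : ℝ} (hC : ∀ k, ‖u k‖ ≤ C)
    (a : lp (fun _ : ι => ℝ) p) : Summable fun k => a k • u k := by
  refine summable_of_summable_norm_rpow hp (pairwise_disjoint_support_smul hu _) ?_
  refine (((lp.memℓp a).summable hp).mul_right (C ^ p.toReal)).of_nonneg_of_le
    (fun k => by positivity) fun k => ?_
  rw [norm_smul, Real.mul_rpow (norm_nonneg _) (norm_nonneg _)]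
  gcongr
  exact hC k

theorem hasSum_norm_rpow_tsum_smul (hp : 0 < p.toReal)
    (hu : Pairwise (Disjoint on fun k => support ⇑(u k))) {C : ℝ} (hC : ∀ k, ‖u k‖ ≤ C)
    (a : lp (fun _ : ι => ℝ) p) :
    HasSum (fun k => ‖a k‖ ^ p.toReal * ‖u k‖ ^ p.toReal) (‖∑' k, a k • u k‖ ^ p.toReal) := by
  simp_rw [← Real.mul_rpow (norm_nonneg _) (norm_nonneg _), ← norm_smul]
  exact hasSum_norm_rpow_of_pairwise_disjoint hp
    (pairwise_disjoint_support_smul hu _) (summable_smul_of_pairwise_disjoint hp hu hC a).hasSum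

theorem norm_tsum_smul_le (hp : 0 < p.toReal)
    (hu : Pairwise (Disjoint on fun k => support ⇑(u k))) (hu1 : ∀ k, ‖u k‖ ≤ 1)
    (a : lp (fun _ : ι => ℝ) p) : ‖∑' k, a k • u k‖ ≤ ‖a‖ := by
  refine (Real.rpow_le_rpow_iff (norm_nonneg _) (norm_nonneg _) hp).1 <|
    hasSum_le (fun k => ?_) (hasSum_norm_rpow_tsum_smul hp hu hu1 a) (lp.hasSum_norm hp a)
  exact mul_le_of_le_one_right (by positivity) (Real.rpow_le_one (norm_nonneg _) (hu1 k) hp.le)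

theorem mul_norm_le_norm_tsum_smul (hp : 0 < p.toReal)
    (hu : Pairwise (Disjoint on fun k => support ⇑(u k))) {c C : ℝ} (hc : 0 ≤ c)
    (hcu : ∀ k, c ≤ ‖u k‖) (hC : ∀ k, ‖u k‖ ≤ C) (a : lp (fun _ : ι => ℝ) p) :
    c * ‖a‖ ≤ ‖∑' k, a k • u k‖ := by
  refine (Real.rpow_le_rpow_iff (by positivity) (norm_nonneg _) hp).1 ?_
  rw [Real.mul_rpow hc (norm_nonneg _)]
  refine hasSum_le (fun k => ?_) ((lp.hasSum_norm hp a).mul_left (c ^ p.toReal))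
    (hasSum_norm_rpow_tsum_smul hp hu hC a)
  rw [mul_comm]
  gcongr
  exact hcu k

theorem exists_clm_hasSum_smul (hp : 0 < p.toReal)
    (hu : Pairwise (Disjoint on fun k => support ⇑(u k))) (hu1 : ∀ k, ‖u k‖ ≤ 1) :
    ∃ S : lp (fun _ : ι => ℝ) p →L[ℝ] lp (fun _ : α => F) p,
      ‖S‖ ≤ 1 ∧ ∀ a, HasSum (fun k => a k • u k) (S a) := by
  have hsum := summable_smul_of_pairwise_disjoint hp hu hu1
  let S : lp (fun _ : ι => ℝ) p →ₗ[ℝ] lp (fun _ : α => F) p :=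
    { toFun a := ∑' k, a k • u k
      map_add' a b := by
        simp only [lp.coeFn_add, Pi.add_apply, add_smul]
        exact (hsum a).tsum_add (hsum b)
      map_smul' c a := by
        simp only [lp.coeFn_smul, Pi.smul_apply, smul_eq_mul, mul_smul, RingHom.id_apply]
        exact (hsum a).tsum_const_smul c }
  refine ⟨S.mkContinuous 1 fun a => ?_, S.mkContinuous_norm_le zero_le_one _,
    fun a => (hsum a).hasSum⟩
  rw [one_mul]
  exact norm_tsum_smul_le hp hu hu1 a

end DisjointSupports

section Indicator

variable {α F : Type*} [NormedAddCommGroup F] [NormedSpace ℝ F] {p : ℝ≥0∞} [Fact (1 ≤ p)]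

noncomputable def indicatorCLM (s : Set α) :
    lp (fun _ : α => F) p →L[ℝ] lp (fun _ : α => F) p :=
  LinearMap.mkContinuous
    { toFun f := ⟨s.indicator f, (lp.memℓp f).mono' fun _ => norm_indicator_le_norm_self _ _⟩
      map_add' f g := lp.ext <| Set.indicator_add' s f g
      map_smul' c f := lp.ext <| Set.indicator_const_smul s c f }
    1 fun f => by
      rw [one_mul]
      exact lp.norm_mono (zero_lt_one.trans_le Fact.out).ne' fun _ =>
        norm_indicator_le_norm_self _ _

variable (s : Set α) (f : lp (fun _ : α => F) p)

@[simp]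
theorem coe_indicatorCLM : ⇑(indicatorCLM s f) = s.indicator ⇑f := rfl

theorem support_indicatorCLM_subset : support ⇑(indicatorCLM s f) ⊆ s := by
  simp

theorem norm_indicatorCLM_le : ‖indicatorCLM s f‖ ≤ ‖f‖ :=
  lp.norm_mono (zero_lt_one.trans_le Fact.out).ne' fun _ => norm_indicator_le_norm_self _ _

theorem norm_sub_indicatorCLM_le : ‖f - indicatorCLM s f‖ ≤ ‖f‖ := by
  have h : f - indicatorCLM s f = indicatorCLM sᶜ f := lp.ext <| by
    simp only [lp.coeFn_sub, coe_indicatorCLM, Set.indicator_compl]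
  rw [h]
  exact norm_indicatorCLM_le _ _

theorem tendsto_indicatorCLM_Ico (hp : p ≠ ⊤) {f : lp (fun _ : ℕ => F) p} {n : ℕ}
    (hf : ∀ i < n, f i = 0) :
    Tendsto (fun m => indicatorCLM (Ico n m) f) atTop (𝓝 f) := by
  refine (lp.hasSum_single hp f).tendsto_sum_nat.congr fun m => lp.ext <| funext fun j => ?_
  classical
  simp only [lp.coeFn_sum, Finset.sum_apply, lp.coeFn_single, Finset.sum_pi_single,
    Finset.mem_range, coe_indicatorCLM, Set.indicator_apply, Set.mem_Ico]
  by_cases hj : n ≤ j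
  · simp [hj]
  · simp [hj, hf j (not_le.1 hj)]

end Indicator

end lp

/-- `‖T|_M‖ ≤ γ` on some closed finite-codimensional subspace, written as `M = ⋂_{g ∈ G} ker g`. -/
def IsBoundedOnFiniteCodim {E F : Type*} [NormedAddCommGroup E] [NormedSpace ℝ E]
    [NormedAddCommGroup F] [NormedSpace ℝ F] (T : E →L[ℝ] F) (γ : ℝ) : Prop :=
  ∃ G : Finset (StrongDual ℝ E), ∀ x, (∀ g ∈ G, g x = 0) → ‖T x‖ ≤ γ * ‖x‖

theorem hchi_le_of_forall_exists_dist_le {Y : Type*} [SeminormedAddCommGroup Y] {A K : Set Y}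
    {r : ℝ} (hA : A.Nonempty) (hK : IsCompact K) (h : ∀ a ∈ A, ∃ k ∈ K, dist a k ≤ r) :
    hchi A ≤ r := by
  refine le_of_forall_pos_le_add fun ε hε => ?_
  obtain ⟨t, -, htf, hKt⟩ := hK.finite_cover_balls hε
  refine csInf_le ⟨0, ?_⟩ ⟨htf.toFinset, fun a ha => ?_⟩
  · rintro s ⟨F, hF⟩
    obtain ⟨y, -, hy⟩ := hF _ hA.some_mem
    exact dist_nonneg.trans hy
  · obtain ⟨k, hk, hak⟩ := h a ha
    obtain ⟨y, hy, hky⟩ := mem_iUnion₂.1 (hKt hk)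
    exact ⟨y, htf.mem_toFinset.2 hy,
      (dist_triangle a k y).trans (add_le_add hak (mem_ball.1 hky).le)⟩

section HahnBanach

variable {E F : Type*} [NormedAddCommGroup E] [NormedSpace ℝ E] [NormedAddCommGroup F]
  [NormedSpace ℝ F]

theorem mem_span_of_forall_eq_zero (G : Finset (StrongDual ℝ E)) {φ : StrongDual ℝ E}
    (hφ : ∀ x, (∀ g ∈ G, g x = 0) → φ x = 0) :
    φ ∈ Submodule.span ℝ (G : Set (StrongDual ℝ E)) := by
  have hker : ⨅ g : G, LinearMap.ker ((g : StrongDual ℝ E) : E →ₗ[ℝ] ℝ) ≤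
      LinearMap.ker (φ : E →ₗ[ℝ] ℝ) := fun x hx => by
    simp only [Submodule.mem_iInf, LinearMap.mem_ker, ContinuousLinearMap.coe_coe] at hx
    exact hφ x fun g hg => hx ⟨g, hg⟩
  have h : ContinuousLinearMap.coeLM ℝ φ ∈
      Submodule.span ℝ (ContinuousLinearMap.coeLM ℝ '' (G : Set (StrongDual ℝ E))) := by
    rw [Set.image_eq_range]
    exact mem_span_of_iInf_ker_le_ker hker
  rw [← Submodule.map_span] at h
  obtain ⟨ψ, hψ, hψφ⟩ := h
  rwa [← ContinuousLinearMap.coe_injective hψφ]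

theorem exists_mem_span_norm_sub_le (G : Finset (StrongDual ℝ E)) (f : StrongDual ℝ E) {γ : ℝ}
    (hγ : 0 ≤ γ) (hf : ∀ x, (∀ g ∈ G, g x = 0) → |f x| ≤ γ * ‖x‖) :
    ∃ φ ∈ Submodule.span ℝ (G : Set (StrongDual ℝ E)), ‖f - φ‖ ≤ γ := by
  let M : Submodule ℝ E := ⨅ g ∈ G, LinearMap.ker (g : E →ₗ[ℝ] ℝ)
  have hM (x : M) : ∀ g ∈ G, g x = 0 := by
    have := x.2
    simp only [M, Submodule.mem_iInf, LinearMap.mem_ker, ContinuousLinearMap.coe_coe] at this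
    exact this
  obtain ⟨h, hext, hnorm⟩ := exists_extension_norm_eq M (f.comp M.subtypeL)
  have hhγ : ‖h‖ ≤ γ := hnorm ▸ ContinuousLinearMap.opNorm_le_bound _ hγ fun x => hf x (hM x)
  refine ⟨f - h, mem_span_of_forall_eq_zero G fun x hx => ?_, by simpa using hhγ⟩
  rw [sub_apply, sub_eq_zero]
  exact (hext ⟨x, by simpa [M] using hx⟩).symm

theorem chiOp_adjOp_le (T : E →L[ℝ] F) {γ : ℝ} (hγ : 0 ≤ γ) (hT : IsBoundedOnFiniteCodim T γ) :
    chiOp (adjOp T) ≤ γ := by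
  obtain ⟨G, hG⟩ := hT
  let V := Submodule.span ℝ (G : Set (StrongDual ℝ E))
  refine hchi_le_of_forall_exists_dist_le ⟨0, 0, mem_closedBall_self zero_le_one, map_zero _⟩
    ((isCompact_closedBall (0 : V) (‖T‖ + γ)).image continuous_subtype_val) ?_
  rintro _ ⟨g, hg, rfl⟩
  have hg1 : ‖g‖ ≤ 1 := mem_closedBall_zero_iff.1 hg
  have hgT : ‖g.comp T‖ ≤ ‖T‖ :=
    (g.opNorm_comp_le T).trans (mul_le_of_le_one_left (norm_nonneg _) hg1)
  obtain ⟨φ, hφV, hφ⟩ := exists_mem_span_norm_sub_le G (g.comp T) hγ fun x hx =>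
    calc |g (T x)| ≤ ‖g‖ * ‖T x‖ := g.le_opNorm _
      _ ≤ ‖T x‖ := mul_le_of_le_one_left (norm_nonneg _) hg1
      _ ≤ γ * ‖x‖ := hG x hx
  have hφnorm : ‖φ‖ ≤ ‖T‖ + γ :=
    calc ‖φ‖ = ‖g.comp T - (g.comp T - φ)‖ := by rw [sub_sub_cancel]
      _ ≤ ‖g.comp T‖ + ‖g.comp T - φ‖ := norm_sub_le _ _
      _ ≤ ‖T‖ + γ := add_le_add hgT hφ
  refine ⟨φ, ⟨⟨φ, hφV⟩, (dist_zero_right _).trans_le hφnorm, rfl⟩,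
    (dist_eq_norm _ _).trans_le hφ⟩

end HahnBanach

section SSZ

variable {X Y Z : Type*} [NormedAddCommGroup X] [NormedSpace ℝ X] [NormedAddCommGroup Y]
  [NormedSpace ℝ Y] [NormedAddCommGroup Z] [NormedSpace ℝ Z] (T : X →L[ℝ] Y)

theorem SSZ_nonneg : 0 ≤ SSZ Z T :=
  Real.sSup_nonneg fun _ ⟨R, _, hc, _, hr⟩ => hr ▸ div_nonneg hc.le (norm_nonneg R)

theorem le_opNorm_mul_opNorm_of_forall_le [Nontrivial Z] {R : Z →L[ℝ] X} {c : ℝ}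
    (h : ∀ z, c * ‖z‖ ≤ ‖T (R z)‖) : c ≤ ‖T‖ * ‖R‖ := by
  obtain ⟨z, hz⟩ := exists_ne (0 : Z)
  refine le_of_mul_le_mul_right ((h z).trans ?_) (norm_pos_iff.2 hz)
  exact ((T.comp R).le_opNorm z).trans
    (mul_le_mul_of_nonneg_right (T.opNorm_comp_le R) (norm_nonneg z))

theorem le_SSZ [Nontrivial Z] {R : Z →L[ℝ] X} (hR : ‖R‖ ≤ 1) {c : ℝ} (hc : 0 < c)
    (h : ∀ z, c * ‖z‖ ≤ ‖T (R z)‖) : c ≤ SSZ Z T := by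
  have hRpos : 0 < ‖R‖ :=
    pos_of_mul_pos_right (hc.trans_le (le_opNorm_mul_opNorm_of_forall_le T h)) (norm_nonneg T)
  have hbdd : BddAbove {r : ℝ | ∃ R : Z →L[ℝ] X, ∃ c : ℝ, 0 < c ∧
      (∀ z, c * ‖z‖ ≤ ‖T (R z)‖) ∧ r = c / ‖R‖} := by
    refine ⟨‖T‖, ?_⟩
    rintro _ ⟨R', c', -, h', rfl⟩
    exact div_le_of_le_mul₀ (norm_nonneg _) (norm_nonneg _)
      (le_opNorm_mul_opNorm_of_forall_le T h')
  calc c ≤ c / ‖R‖ := le_div_self hc.le hRpos hR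
    _ ≤ SSZ Z T := le_csSup hbdd ⟨R, c, hc, h, rfl⟩

end SSZ

section GlidingHump

open lp

variable {p : ℝ≥0∞} [Fact (1 ≤ p)]

local notation "ℓₚ" => lp (fun _ : ℕ => ℝ) p

theorem norm_sub_tsum_smul_le {ι E : Type*} [NormedAddCommGroup E] [NormedSpace ℝ E]
    (a : lp (fun _ : ι => ℝ) p) {x w : ι → E} {y : E} (hx : HasSum (fun k => a k • x k) y)
    (hw : Summable fun k => a k • w k) {η : ι → ℝ} {ε : ℝ} (hη : HasSum η ε)
    (hxw : ∀ k, ‖x k - w k‖ ≤ η k) : ‖y - ∑' k, a k • w k‖ ≤ ‖a‖ * ε := by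
  refine (hx.sub hw.hasSum).norm_le_of_bounded (hη.mul_left ‖a‖) fun k => ?_
  rw [← smul_sub, norm_smul]
  exact mul_le_mul (lp.norm_apply_le_norm (zero_lt_one.trans_le Fact.out).ne' a k) (hxw k)
    (norm_nonneg _) (norm_nonneg _)

theorem exists_norm_eq_one_of_not_isBoundedOnFiniteCodim {T : ℓₚ →L[ℝ] ℓₚ} {γ : ℝ}
    (hT : ¬ IsBoundedOnFiniteCodim T γ) (n : ℕ) :
    ∃ x : ℓₚ, ‖x‖ = 1 ∧ (∀ i < n, x i = 0) ∧ (∀ i < n, T x i = 0) ∧ γ < ‖T x‖ := by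
  classical
  unfold IsBoundedOnFiniteCodim at hT
  push Not at hT
  -- the coordinate functionals below `n` and their pullbacks under `T` vanish at `x`
  obtain ⟨x, hxG, hTx⟩ := hT ((Finset.range n).image (lp.evalCLM ℝ (fun _ : ℕ => ℝ) p) ∪
    (Finset.range n).image fun i => (lp.evalCLM ℝ (fun _ : ℕ => ℝ) p i).comp T)
  have hx : 0 < ‖x‖ := norm_pos_iff.2 fun h => by simp [h] at hTx
  have hx0 (i : ℕ) (hi : i < n) : x i = 0 :=
    hxG _ (Finset.mem_union_left _ (Finset.mem_image_of_mem _ (Finset.mem_range.2 hi)))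
  have hTx0 (i : ℕ) (hi : i < n) : T x i = 0 :=
    hxG _ (Finset.mem_union_right _ (Finset.mem_image_of_mem (fun i =>
      (lp.evalCLM ℝ (fun _ : ℕ => ℝ) p i).comp T) (Finset.mem_range.2 hi)))
  refine ⟨‖x‖⁻¹ • x, ?_, fun i hi => ?_, fun i hi => ?_, ?_⟩
  · rw [norm_smul, norm_inv, norm_norm, inv_mul_cancel₀ hx.ne']
  · simp [hx0 i hi]
  · simp [hTx0 i hi]
  · rw [map_smul, norm_smul, norm_inv, norm_norm, lt_inv_mul_iff₀ hx, mul_comm]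
    exact hTx

theorem exists_block_of_not_isBoundedOnFiniteCodim (hp : p ≠ ⊤) {T : ℓₚ →L[ℝ] ℓₚ} {γ : ℝ}
    (hT : ¬ IsBoundedOnFiniteCodim T γ) (n : ℕ) {η : ℝ} (hη : 0 < η) :
    ∃ n' ≥ n, ∃ v : ℓₚ, ‖v‖ ≤ 1 ∧ support ⇑v ⊆ Ico n n' ∧
      ‖T v - indicatorCLM (Ico n n') (T v)‖ ≤ η ∧ γ - η ≤ ‖indicatorCLM (Ico n n') (T v)‖ := by
  obtain ⟨x, hx1, hx0, hTx0, hTx⟩ := exists_norm_eq_one_of_not_isBoundedOnFiniteCodim hT n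
  set δ := η / (2 * ‖T‖ + 1)
  have hηδ : (2 * ‖T‖ + 1) * δ = η := mul_div_cancel₀ _ (by positivity)
  have hδ : 0 < δ := by positivity
  have hTδ : 0 ≤ ‖T‖ * δ := by positivity
  obtain ⟨n', ⟨hxn', hTxn'⟩, hnn'⟩ :=
    (((tendsto_indicatorCLM_Ico hp hx0).eventually (closedBall_mem_nhds _ hδ)).and
      ((tendsto_indicatorCLM_Ico hp hTx0).eventually (closedBall_mem_nhds _ hδ)) |>.and
      (eventually_ge_atTop n)).exists
  set P : ℓₚ →L[ℝ] ℓₚ := indicatorCLM (Ico n n')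
  rw [dist_eq_norm'] at hxn' hTxn'
  have hTPx : ‖T (P x) - T x‖ ≤ ‖T‖ * δ := by
    rw [← map_sub]
    exact T.le_opNorm_of_le (norm_sub_rev x (P x) ▸ hxn')
  have hdefect : ‖T (P x) - P (T (P x))‖ ≤ ‖T‖ * δ + δ :=
    calc ‖T (P x) - P (T (P x))‖ = ‖(T (P x) - T x) - P (T (P x) - T x) + (T x - P (T x))‖ := by
          rw [map_sub]; abel_nf
      _ ≤ ‖T (P x) - T x‖ + δ :=
          (norm_add_le _ _).trans (add_le_add (norm_sub_indicatorCLM_le _ _) hTxn')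
      _ ≤ ‖T‖ * δ + δ := by linarith
  refine ⟨n', hnn', P x, (norm_indicatorCLM_le _ _).trans hx1.le,
    support_indicatorCLM_subset _ _, by linarith, ?_⟩
  have := norm_sub_norm_le (T (P x)) (P (T (P x)))
  have := norm_sub_norm_le (T x) (T (P x))
  rw [norm_sub_rev] at this
  linarith

theorem exists_blocks_of_not_isBoundedOnFiniteCodim (hp : p ≠ ⊤) {T : ℓₚ →L[ℝ] ℓₚ} {γ : ℝ}
    (hT : ¬ IsBoundedOnFiniteCodim T γ) {η : ℕ → ℝ} (hη : ∀ k, 0 < η k) :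
    ∃ (B : ℕ → Set ℕ) (v : ℕ → ℓₚ), Pairwise (Disjoint on B) ∧ ∀ k, ‖v k‖ ≤ 1 ∧
      support ⇑(v k) ⊆ B k ∧ ‖T (v k) - indicatorCLM (B k) (T (v k))‖ ≤ η k ∧
      γ - η k ≤ ‖indicatorCLM (B k) (T (v k))‖ := by
  choose N hN v hv using fun k n => exists_block_of_not_isBoundedOnFiniteCodim hp hT n (hη k)
  let cut : ℕ → ℕ := fun k => Nat.rec 0 (fun k n => N k n) k
  have hcut : Monotone cut := monotone_nat_of_le_succ fun k => hN k (cut k)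
  exact ⟨fun k => Ico (cut k) (cut (k + 1)), fun k => v k (cut k),
    hcut.pairwise_disjoint_on_Ico_succ, fun k => hv k (cut k)⟩

theorem exists_forall_mul_norm_le_norm_comp (hp : p ≠ ⊤) {T : ℓₚ →L[ℝ] ℓₚ} {γ c : ℝ}
    (hT : ¬ IsBoundedOnFiniteCodim T γ) (hc : 0 ≤ c) (hcγ : c < γ) :
    ∃ S : ℓₚ →L[ℝ] ℓₚ, ‖S‖ ≤ 1 ∧ ∀ a, c * ‖a‖ ≤ ‖T (S a)‖ := by
  have hp' : 0 < p.toReal := ENNReal.toReal_pos (zero_lt_one.trans_le Fact.out).ne' hp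
  set ε := (γ - c) / 2 with hε
  have hε0 : 0 < ε := by linarith
  obtain ⟨B, v, hB, hv⟩ := exists_blocks_of_not_isBoundedOnFiniteCodim hp hT
    (η := fun k => ε / 2 / 2 ^ k) fun k => by positivity
  choose hv1 hvB hdefect hlow using hv
  let w k := indicatorCLM (B k) (T (v k))
  have hvdisj : Pairwise (Disjoint on fun k => support ⇑(v k)) := fun k l hkl =>
    (hB hkl).mono (hvB k) (hvB l)
  have hwdisj : Pairwise (Disjoint on fun k => support ⇑(w k)) := fun k l hkl =>
    (hB hkl).mono (support_indicatorCLM_subset _ _) (support_indicatorCLM_subset _ _)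
  have hwT (k : ℕ) : ‖w k‖ ≤ ‖T‖ :=
    (norm_indicatorCLM_le _ _).trans ((T.le_opNorm_of_le (hv1 k)).trans_eq (mul_one _))
  have hwγ (k : ℕ) : γ - ε ≤ ‖w k‖ := by
    refine le_trans ?_ (hlow k)
    have : ε / 2 / 2 ^ k ≤ ε :=
      (div_le_self (by positivity) (one_le_pow₀ one_le_two)).trans (half_le_self hε0.le)
    linarith
  obtain ⟨S, hS1, hS⟩ := exists_clm_hasSum_smul hp' hvdisj hv1
  refine ⟨S, hS1, fun a => ?_⟩
  have hTS : HasSum (fun k => a k • T (v k)) (T (S a)) := by simpa using (hS a).mapL T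
  have hW := mul_norm_le_norm_tsum_smul hp' hwdisj (by linarith) hwγ hwT a
  have herr := norm_sub_tsum_smul_le a hTS (summable_smul_of_pairwise_disjoint hp' hwdisj hwT a)
    (hasSum_geometric_two' ε) hdefect
  have := norm_sub_norm_le (∑' k, a k • w k) (T (S a))
  rw [norm_sub_rev] at this
  have : c * ‖a‖ = (γ - ε) * ‖a‖ - ‖a‖ * ε := by rw [hε]; ring
  linarith

end GlidingHump

theorem stmt19_general (p : ℝ≥0∞) [Fact (1 ≤ p)] (hp2 : p ≠ ⊤)
    (T : lp (fun _ : ℕ => ℝ) p →L[ℝ] lp (fun _ : ℕ => ℝ) p) :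
    chiOp (adjOp T) ≤ SSZ (lp (fun _ : ℕ => ℝ) p) T := by
  have : Nontrivial (lp (fun _ : ℕ => ℝ) p) :=
    ⟨lp.single p 0 1, 0, fun h => one_ne_zero (congrFun (congrArg (⇑) h) 0)⟩
  refine le_of_forall_gt_imp_ge_of_dense fun γ hγ => ?_
  by_cases hT : IsBoundedOnFiniteCodim T γ
  · exact chiOp_adjOp_le T ((SSZ_nonneg T).trans hγ.le) hT
  · obtain ⟨c, hc, hcγ⟩ := exists_between hγ
    obtain ⟨S, hS1, hS⟩ :=
      exists_forall_mul_norm_le_norm_comp hp2 hT ((SSZ_nonneg T).trans hc.le) hcγ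
    exact absurd (le_SSZ T hS1 ((SSZ_nonneg T).trans_lt hc) hS) hc.not_ge

theorem stmt19 (p : ℝ≥0∞) [Fact (1 ≤ p)] (hp1 : 1 < p) (hp2 : p ≠ ⊤)
    (T : lp (fun _ : ℕ => ℝ) p →L[ℝ] lp (fun _ : ℕ => ℝ) p) :
    chiOp (adjOp T) ≤ SSZ (lp (fun _ : ℕ => ℝ) p) T :=
  stmt19_general p hp2 T
end
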